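/- arXiv:2001.08149 — 7 statements merged into one kernel-verified Lean document; each statement's English description precedes it below -/
import Mathlib

section
/- Let E be a reflexive, strictly convex Banach space and let C be a nonempty closed convex subset of E. Then for every x ∈ E there exists a unique u ∈ C such that ‖u - x‖ ≤ ‖c - x‖ for all c ∈ C. -/
/-!
Existence: the sublevel sets of the convex continuous function `c ↦ ‖c - x‖` are closed and
convex, hence weakly closed, so the function is weakly lower semicontinuous. In a reflexive space
bounded weakly closed sets are weakly compact (Banach–Alaoglu in the bidual), so the function
attains its minimum on the bounded part `C ∩ closedBall x ‖c₀ - x‖` of `C`, and that is a minimum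
on all of `C`.

Uniqueness: if `u ≠ v` were two nearest points at distance `m`, strict convexity would put their
midpoint, which lies in `C`, at distance `< m` from `x`.
-/

open Metric NormedSpace

section WeakTopology

variable {E : Type*} [NormedAddCommGroup E] [NormedSpace ℝ E]

theorem Convex.isClosed_toWeakSpace_image {s : Set E} (hconv : Convex ℝ s) (hs : IsClosed s) :
    IsClosed (toWeakSpace ℝ E '' s) := by
  rw [← hs.closure_eq, hconv.toWeakSpace_closure ℝ]
  exact isClosed_closure

theorem ConvexOn.lowerSemicontinuous_comp_ofWeakSpace {f : E → ℝ} (hconv : ConvexOn ℝ Set.univ f)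
    (hf : LowerSemicontinuous f) :
    LowerSemicontinuous (f ∘ (toWeakSpace ℝ E).symm) := by
  rw [lowerSemicontinuous_iff_isClosed_preimage]
  intro r
  rw [Set.preimage_comp, ← LinearEquiv.image_eq_preimage_symm]
  have hsub : Convex ℝ {y | f y ≤ r} := by simpa only [Set.sep_univ] using hconv.convex_le r
  exact hsub.isClosed_toWeakSpace_image (hf.isClosed_preimage r)

theorem isCompact_toWeakSpace_image_of_reflexive
    (hrefl : Function.Surjective (inclusionInDoubleDual ℝ E)) {s : Set E}
    (hb : Bornology.IsBounded s) (hs : IsClosed s) (hconv : Convex ℝ s) :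
    IsCompact (toWeakSpace ℝ E '' s) := by
  have hclosed := hconv.isClosed_toWeakSpace_image hs
  rw [← hclosed.closure_eq]
  refine isCompact_closure_of_isBounded ℝ E _ ?_ fun ψ _ => hrefl ψ
  rwa [Set.preimage_image_eq _ (toWeakSpace ℝ E).injective]

theorem exists_nearest_point_of_reflexive
    (hrefl : Function.Surjective (inclusionInDoubleDual ℝ E)) {C : Set E} (hCne : C.Nonempty)
    (hCc : IsClosed C) (hCconv : Convex ℝ C) (x : E) :
    ∃ u ∈ C, ∀ c ∈ C, ‖u - x‖ ≤ ‖c - x‖ := by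
  obtain ⟨c₀, hc₀⟩ := hCne
  set K := C ∩ closedBall x ‖c₀ - x‖
  have hc₀K : c₀ ∈ K := ⟨hc₀, by rw [mem_closedBall, dist_eq_norm]⟩
  have hK : IsCompact (toWeakSpace ℝ E '' K) :=
    isCompact_toWeakSpace_image_of_reflexive hrefl
      (isBounded_closedBall.subset Set.inter_subset_right) (hCc.inter isClosed_closedBall) (hCconv.inter (convex_closedBall x _))
  have hdist : LowerSemicontinuous ((fun c => ‖c - x‖) ∘ (toWeakSpace ℝ E).symm) :=
    ConvexOn.lowerSemicontinuous_comp_ofWeakSpace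
      ((convexOn_norm convex_univ).comp_affineMap (AffineMap.id ℝ E - AffineMap.const ℝ E x))
      (continuous_id.sub continuous_const).norm.lowerSemicontinuous
  obtain ⟨_, ⟨u, huK, rfl⟩, hmin⟩ : ∃ w ∈ toWeakSpace ℝ E '' K,
      IsMinOn ((fun c => ‖c - x‖) ∘ (toWeakSpace ℝ E).symm) (toWeakSpace ℝ E '' K) w :=
    (hdist.lowerSemicontinuousOn _).exists_isMinOn ⟨_, c₀, hc₀K, rfl⟩ hK
  have hmin' : ∀ c ∈ K, ‖u - x‖ ≤ ‖c - x‖ := fun c hc => by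
    simpa using hmin ⟨c, hc, rfl⟩
  refine ⟨u, huK.1, fun c hc => ?_⟩
  by_cases hcK : ‖c - x‖ ≤ ‖c₀ - x‖
  · exact hmin' c ⟨hc, by rwa [mem_closedBall, dist_eq_norm]⟩
  · exact (hmin' c₀ hc₀K).trans (le_of_not_ge hcK)

end WeakTopology

theorem StrictConvexSpace.of_norm_midpoint_lt_one {E : Type*} [NormedAddCommGroup E]
    [NormedSpace ℝ E]
    (h : ∀ x y : E, ‖x‖ = 1 → ‖y‖ = 1 → x ≠ y → ‖(1 / 2 : ℝ) • (x + y)‖ < 1) :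
    StrictConvexSpace ℝ E :=
  StrictConvexSpace.of_norm_add_ne_two fun x y hx hy hxy => by
    have hlt := h x y hx hy hxy
    rw [norm_smul, Real.norm_of_nonneg (by norm_num)] at hlt
    linarith

theorem eq_of_nearest_points_of_strictConvexSpace {E : Type*} [NormedAddCommGroup E]
    [NormedSpace ℝ E] [StrictConvexSpace ℝ E] {C : Set E} (hCconv : Convex ℝ C) {x u v : E}
    (hu : u ∈ C) (hv : v ∈ C) (hu_min : ∀ c ∈ C, ‖u - x‖ ≤ ‖c - x‖)
    (hv_min : ∀ c ∈ C, ‖v - x‖ ≤ ‖c - x‖) :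
    u = v := by
  have hmid : (1 / 2 : ℝ) • (u + v) ∈ C := by
    simpa only [smul_add] using hCconv hu hv (by norm_num) (by norm_num) (add_halves 1)
  have heq : ‖u - x‖ = ‖v - x‖ := le_antisymm (hu_min v hv) (hv_min u hu)
  by_contra hne
  have hlt := (norm_midpoint_lt_iff heq).2 (sub_left_injective.ne hne)
  have hmid_eq : (1 / 2 : ℝ) • (u - x + (v - x)) = (1 / 2 : ℝ) • (u + v) - x := by module
  rw [hmid_eq] at hlt
  exact (hu_min _ hmid).not_gt hlt

theorem stmt_1_general {E : Type*} [NormedAddCommGroup E] [NormedSpace ℝ E]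
    (hrefl : Function.Surjective (NormedSpace.inclusionInDoubleDual ℝ E))
    (hsc : ∀ x y : E, ‖x‖ = 1 → ‖y‖ = 1 → x ≠ y → ‖(1 / 2 : ℝ) • (x + y)‖ < 1)
    (C : Set E) (hCne : C.Nonempty) (hCc : IsClosed C) (hCconv : Convex ℝ C)
    (x : E) :
    ∃! u, u ∈ C ∧ ∀ c ∈ C, ‖u - x‖ ≤ ‖c - x‖ := by
  have : StrictConvexSpace ℝ E := .of_norm_midpoint_lt_one hsc
  obtain ⟨u, hu, hu_min⟩ := exists_nearest_point_of_reflexive hrefl hCne hCc hCconv x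
  exact ⟨u, ⟨hu, hu_min⟩, fun v ⟨hv, hv_min⟩ =>
    eq_of_nearest_points_of_strictConvexSpace hCconv hv hu hv_min hu_min⟩

/-- In a reflexive strictly convex Banach space, every point admits a
unique nearest point in a nonempty closed convex set. -/
theorem stmt_1 {E : Type*} [NormedAddCommGroup E] [NormedSpace ℝ E] [CompleteSpace E]
    (hrefl : Function.Surjective (NormedSpace.inclusionInDoubleDual ℝ E))
    (hsc : ∀ x y : E, ‖x‖ = 1 → ‖y‖ = 1 → x ≠ y → ‖(1 / 2 : ℝ) • (x + y)‖ < 1)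
    (C : Set E) (hCne : C.Nonempty) (hCc : IsClosed C) (hCconv : Convex ℝ C)
    (x : E) :
    ∃! u, u ∈ C ∧ ∀ c ∈ C, ‖u - x‖ ≤ ‖c - x‖ :=
  stmt_1_general hrefl hsc C hCne hCc hCconv x
end

section
/- Let E be a reflexive, strictly convex Banach space, C a nonempty closed convex subset of E, and {T_s : s ∈ S} a representation of a semigroup S on C by nonexpansive self-maps. Then the set of attractive points A_C(S) is nonempty if and only if the set of common fixed points F(S) is nonempty; moreover F(S) ⊆ A_C(S). -/
/-!
A common fixed point `p` is attractive since `‖p - T s x‖ = ‖T s p - T s x‖ ≤ ‖p - x‖`.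
Conversely, let `a` be attractive and let `p` be a point of `C` nearest to `a`. It exists because
in a reflexive space bounded closed convex sets are weakly compact (Banach–Alaoglu in the bidual
plus Hahn–Banach separation), and it is unique because `E` is strictly convex. Attractiveness
gives `‖a - T s p‖ ≤ ‖a - p‖`, so `T s p` is also a nearest point, whence `T s p = p`.
-/

open Filter Metric NormedSpace Topology

section

variable {E : Type*} [NormedAddCommGroup E] [NormedSpace ℝ E]

theorem exists_forall_closed_convex_mem_of_reflexive
    (hrefl : Function.Surjective (inclusionInDoubleDual ℝ E)) {l : Filter E} [l.NeBot]
    {B : Set E} (hB : Bornology.IsBounded B) (hBl : B ∈ l) :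
    ∃ p, ∀ D ∈ l, IsClosed D → Convex ℝ D → p ∈ D := by
  obtain ⟨R, hR⟩ := hB.subset_closedBall 0
  let J (x : E) : WeakDual ℝ (StrongDual ℝ E) :=
    StrongDual.toWeakDual (inclusionInDoubleDual ℝ E x)
  have hJl : map J l ≤ 𝓟 (WeakDual.toStrongDual ⁻¹' closedBall 0 R) := by
    refine le_principal_iff.mpr (mem_map.mpr (mem_of_superset hBl fun x hx => ?_))
    exact mem_closedBall.mpr <|
      (dist_zero_right (WeakDual.toStrongDual (J x) : StrongDual ℝ (StrongDual ℝ E))).trans_le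
        ((double_dual_bound ℝ E x).trans (mem_closedBall_zero_iff.mp (hR hx)))
  obtain ⟨Λ, -, hΛ⟩ := (WeakDual.isCompact_closedBall 0 R).exists_mapClusterPt hJl
  obtain ⟨p, hp⟩ := hrefl (WeakDual.toStrongDual Λ)
  refine ⟨p, fun D hD hDc hDconv => by_contra fun hpD => ?_⟩
  obtain ⟨f, u, hfD, hfp⟩ := geometric_hahn_banach_closed_point hDconv hDc hpD
  have hΛf : ∀ᶠ Ψ in 𝓝 Λ, u < Ψ f :=
    (WeakDual.eval_continuous f).continuousAt.eventually
      (lt_mem_nhds (hfp.trans_eq (DFunLike.congr_fun hp f)))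
  obtain ⟨x, hxf, hxD⟩ := ((hΛ.frequently hΛf).and_eventually hD).exists
  exact (hfD x hxD).not_gt hxf

theorem exists_norm_sub_le_of_reflexive
    (hrefl : Function.Surjective (inclusionInDoubleDual ℝ E)) {C : Set E} (hCne : C.Nonempty)
    (hCc : IsClosed C) (hCconv : Convex ℝ C) (a : E) :
    ∃ p ∈ C, ∀ x ∈ C, ‖a - p‖ ≤ ‖a - x‖ := by
  set d := infDist a C
  have hseq (n : ℕ) : ∃ x ∈ C, dist a x < d + 1 / (n + 1) :=
    (infDist_lt_iff hCne).mp (lt_add_of_pos_right d Nat.one_div_pos_of_nat)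
  choose x hxC hxd using hseq
  have hmem (ε : ℝ) (hε : 0 < ε) : C ∩ closedBall a (d + ε) ∈ map x atTop := by
    obtain ⟨N, hN⟩ := exists_nat_one_div_lt hε
    refine mem_map.mpr (mem_of_superset (Ici_mem_atTop N) fun n hn => ?_)
    have : (1 : ℝ) / (n + 1) ≤ 1 / (N + 1) := Nat.one_div_le_one_div (Set.mem_Ici.mp hn)
    exact ⟨hxC n, mem_closedBall'.mpr (by linarith [hxd n])⟩
  obtain ⟨p, hp⟩ := exists_forall_closed_convex_mem_of_reflexive hrefl
    (isBounded_closedBall.subset Set.inter_subset_right) (hmem 1 one_pos)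
  have hpε (ε : ℝ) (hε : 0 < ε) : p ∈ C ∩ closedBall a (d + ε) :=
    hp _ (hmem ε hε) (hCc.inter isClosed_closedBall) (hCconv.inter (convex_closedBall a _))
  have hpd : dist a p ≤ d :=
    le_of_forall_pos_le_add fun ε hε => mem_closedBall'.mp (hpε ε hε).2
  refine ⟨p, (hpε 1 one_pos).1, fun y hy => ?_⟩
  rw [← dist_eq_norm, ← dist_eq_norm]
  exact hpd.trans (infDist_le_dist_of_mem hy)

theorem eq_of_norm_sub_le_of_forall_norm_sub_le [StrictConvexSpace ℝ E] {C : Set E}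
    (hC : Convex ℝ C) {a p q : E} (hp : p ∈ C) (hq : q ∈ C)
    (hmin : ∀ x ∈ C, ‖a - p‖ ≤ ‖a - x‖) (hqp : ‖a - q‖ ≤ ‖a - p‖) : q = p := by
  by_contra hne
  have hlt := (norm_midpoint_lt_iff (le_antisymm (hmin q hq) hqp)).mpr
    fun h => hne (sub_right_injective h).symm
  have hmid : (1 / 2 : ℝ) • (a - p + (a - q)) = a - ((1 / 2 : ℝ) • p + (1 / 2 : ℝ) • q) := by
    module
  rw [hmid] at hlt
  exact hlt.not_ge (hmin _ (hC hp hq (by norm_num) (by norm_num) (by norm_num)))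

end

theorem stmt_4_general {E : Type*} [NormedAddCommGroup E] [NormedSpace ℝ E]
    (hrefl : Function.Surjective (NormedSpace.inclusionInDoubleDual ℝ E))
    (hsc : ∀ x y : E, ‖x‖ = 1 → ‖y‖ = 1 → x ≠ y → ‖(1 / 2 : ℝ) • (x + y)‖ < 1)
    (C : Set E) (hCne : C.Nonempty) (hCc : IsClosed C) (hCconv : Convex ℝ C)
    {S : Type*} [Semigroup S] (T : S → E → E)
    (hmaps : ∀ s, Set.MapsTo (T s) C C)
    (hne : ∀ s : S, ∀ x ∈ C, ∀ y ∈ C, ‖T s x - T s y‖ ≤ ‖x - y‖) :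
    let A : Set E := {a | ∀ s : S, ∀ x ∈ C, ‖a - T s x‖ ≤ ‖a - x‖}
    let F : Set E := {x | x ∈ C ∧ ∀ s : S, T s x = x}
    (A.Nonempty ↔ F.Nonempty) ∧ F ⊆ A := by
  intro A F
  have : StrictConvexSpace ℝ E := StrictConvexSpace.of_norm_combo_lt_one fun x y hx hy hxy =>
    ⟨1 / 2, 1 / 2, by norm_num, by simpa only [smul_add] using hsc x y hx hy hxy⟩
  have hFA : F ⊆ A := fun p ⟨hpC, hfix⟩ s x hx => by
    simpa only [hfix s] using hne s p hpC x hx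
  refine ⟨⟨fun ⟨a, ha⟩ => ?_, fun ⟨p, hp⟩ => ⟨p, hFA hp⟩⟩, hFA⟩
  obtain ⟨p, hpC, hpmin⟩ := exists_norm_sub_le_of_reflexive hrefl hCne hCc hCconv a
  exact ⟨p, hpC, fun s =>
    eq_of_norm_sub_le_of_forall_norm_sub_le hCconv hpC (hmaps s hpC) hpmin (ha s p hpC)⟩

/-- For a nonexpansive representation of a semigroup `S` on a nonempty
closed convex subset `C` of a reflexive strictly convex Banach space, the set of
attractive points is nonempty iff the set of common fixed points is nonempty;
moreover every common fixed point is an attractive point. -/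
theorem stmt_4 {E : Type*} [NormedAddCommGroup E] [NormedSpace ℝ E] [CompleteSpace E]
    (hrefl : Function.Surjective (NormedSpace.inclusionInDoubleDual ℝ E))
    (hsc : ∀ x y : E, ‖x‖ = 1 → ‖y‖ = 1 → x ≠ y → ‖(1 / 2 : ℝ) • (x + y)‖ < 1)
    (C : Set E) (hCne : C.Nonempty) (hCc : IsClosed C) (hCconv : Convex ℝ C)
    {S : Type*} [Semigroup S] (T : S → E → E)
    (hmaps : ∀ s, Set.MapsTo (T s) C C)
    (hrep : ∀ s t : S, ∀ x ∈ C, T (s * t) x = T s (T t x))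
    (hne : ∀ s : S, ∀ x ∈ C, ∀ y ∈ C, ‖T s x - T s y‖ ≤ ‖x - y‖) :
    let A : Set E := {a | ∀ s : S, ∀ x ∈ C, ‖a - T s x‖ ≤ ‖a - x‖}
    let F : Set E := {x | x ∈ C ∧ ∀ s : S, T s x = x}
    (A.Nonempty ↔ F.Nonempty) ∧ F ⊆ A :=
  stmt_4_general hrefl hsc C hCne hCc hCconv T hmaps hne
end

section
/- Let C = {x ∈ ℓ^p : x₁ ≥ 0} for p ≥ 1 (a closed convex subset of ℓ^p) and define T : C → C by T(x₁, x₂, x₃, ...) = (x₁, x₁, x₂, x₃, ...). Then T is continuous, T has the fixed point 0 = (0,0,0,...), but T admits no attractive point: there is no a ∈ ℓ^p with ‖a - Tx‖ ≤ ‖a - x‖ for all x ∈ C. -/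
/-! For `x = t e₀` with `t ≥ 0` the images `T x = t e₀ + t e₁` and `x` differ only in coordinate 1,
where `a - T x` has entry `a₁ - t` and `a - x` has entry `a₁`. Taking `t = 2|a₁| + 1` makes the first
strictly larger in absolute value, and for `p < ∞` the `ℓ^p` norm is strictly monotone in each
coordinate, so `‖a - T x‖ > ‖a - x‖`. -/

open scoped ENNReal

theorem HasSum.comp_pred {G : Type*} [AddCommGroup G] [TopologicalSpace G]
    [IsTopologicalAddGroup G] {f : ℕ → G} {a : G} (h : HasSum f a) :
    HasSum (fun n => f (n - 1)) (f 0 + a) := by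
  rw [← hasSum_nat_add_iff' 1]
  simpa using h

variable {E : Type*} [NormedAddCommGroup E] {p : ℝ≥0∞}

theorem Memℓp.comp_pred (hp : 0 < p.toReal) {x : ℕ → E} (hx : Memℓp x p) :
    Memℓp (fun n => x (n - 1)) p :=
  memℓp_gen ((hx.summable hp).hasSum.comp_pred).summable

namespace lp

theorem norm_lt_norm_of_forall_norm_le {ι : Type*} {F : ι → Type*}
    [∀ i, NormedAddCommGroup (F i)] (hp : 0 < p.toReal) {u v : lp F p}
    (h : ∀ i, ‖u i‖ ≤ ‖v i‖) {j : ι} (hj : ‖u j‖ < ‖v j‖) : ‖u‖ < ‖v‖ := by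
  rw [← Real.rpow_lt_rpow_iff (norm_nonneg' _) (norm_nonneg' _) hp]
  exact hasSum_lt (fun i => Real.rpow_le_rpow (norm_nonneg _) (h i) hp.le)
    (Real.rpow_lt_rpow (norm_nonneg _) hj hp) (lp.hasSum_norm hp u) (lp.hasSum_norm hp v)

/-- `(x₀, x₁, x₂, …) ↦ (x₀, x₀, x₁, …)`, as `n ↦ x (n - 1)` using `0 - 1 = 0` in `ℕ`. -/
def dupHead (hp : 0 < p.toReal) : lp (fun _ : ℕ => E) p →+ lp (fun _ : ℕ => E) p where
  toFun x := ⟨fun n => x (n - 1), (lp.memℓp x).comp_pred hp⟩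
  map_zero' := rfl
  map_add' _ _ := rfl

variable (hp : 0 < p.toReal)

theorem dupHead_apply (x : lp (fun _ : ℕ => E) p) (n : ℕ) : dupHead hp x n = x (n - 1) := rfl

theorem norm_dupHead_rpow (x : lp (fun _ : ℕ => E) p) :
    ‖dupHead hp x‖ ^ p.toReal = ‖x 0‖ ^ p.toReal + ‖x‖ ^ p.toReal :=
  (lp.hasSum_norm hp _).unique (lp.hasSum_norm hp x).comp_pred

theorem norm_dupHead_le (x : lp (fun _ : ℕ => E) p) :
    ‖dupHead hp x‖ ≤ 2 ^ p.toReal⁻¹ * ‖x‖ := by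
  have hx0 : ‖x 0‖ ^ p.toReal ≤ ‖x‖ ^ p.toReal := Real.rpow_le_rpow (norm_nonneg _)
    (norm_apply_le_norm (ENNReal.toReal_pos_iff.mp hp).1.ne' x 0) hp.le
  rw [← Real.rpow_le_rpow_iff (norm_nonneg' _) (mul_nonneg (by positivity) (norm_nonneg' _)) hp,
    norm_dupHead_rpow, Real.mul_rpow (by positivity) (norm_nonneg' _),
    Real.rpow_inv_rpow zero_le_two hp.ne']
  linarith

theorem continuous_dupHead [Fact (1 ≤ p)] : Continuous (dupHead (E := E) hp) :=
  AddMonoidHomClass.continuous_of_bound _ _ (norm_dupHead_le hp)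

theorem exists_norm_sub_single_lt_norm_sub_dupHead (a : lp (fun _ : ℕ => ℝ) p) :
    ∃ t : ℝ, 0 ≤ t ∧ ‖a - lp.single p 0 t‖ < ‖a - dupHead hp (lp.single p 0 t)‖ := by
  set t := 2 * |a 1| + 1
  have hgap : |a 1| < |a 1 - t| := by linarith [neg_le_abs (a 1 - t), le_abs_self (a 1)]
  refine ⟨t, by positivity, norm_lt_norm_of_forall_norm_le hp (j := 1) ?_ ?_⟩
  · rintro (_ | _ | n) <;> simp [dupHead_apply, lp.single_apply, hgap.le]
  · simpa [dupHead_apply, lp.single_apply] using hgap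

end lp

open lp in
/-- In `ℓ^p` (`1 ≤ p < ∞`), the set `C = {x : x₀ ≥ 0}` is closed and
convex, and the map `T(x₁,x₂,…) = (x₁,x₁,x₂,…)` is a continuous self-map of `C`
with fixed point `0`, yet `T` has no attractive point for `C`. -/
theorem stmt_5 (p : ℝ≥0∞) [Fact (1 ≤ p)] (hp' : p ≠ ⊤) :
    let C : Set (lp (fun _ : ℕ => ℝ) p) := {x | 0 ≤ x 0}
    IsClosed C ∧ Convex ℝ C ∧
    ∃ T : C → C,
      (∀ x : C, ((T x : lp (fun _ : ℕ => ℝ) p) 0 = (x : lp (fun _ : ℕ => ℝ) p) 0) ∧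
        ∀ n : ℕ, (T x : lp (fun _ : ℕ => ℝ) p) (n + 1) = (x : lp (fun _ : ℕ => ℝ) p) n) ∧
      Continuous T ∧
      (∃ z : C, (z : lp (fun _ : ℕ => ℝ) p) = 0 ∧ T z = z) ∧
      ¬ ∃ a : lp (fun _ : ℕ => ℝ) p, ∀ x : C,
          ‖a - (T x : lp (fun _ : ℕ => ℝ) p)‖ ≤ ‖a - (x : lp (fun _ : ℕ => ℝ) p)‖ := by
  intro C
  have hp : 0 < p.toReal :=
    ENNReal.toReal_pos (zero_lt_one.trans_le Fact.out).ne' hp'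
  refine ⟨isClosed_le continuous_const (lipschitzWith_one_eval p 0).continuous,
    convex_halfSpace_ge (evalₗ (𝕜 := ℝ) _ p 0).isLinear 0,
    fun x => ⟨dupHead hp x, x.2⟩, fun x => ⟨rfl, fun n => rfl⟩,
    ((continuous_dupHead hp).comp continuous_subtype_val).subtype_mk _,
    ⟨⟨0, by simp [C]⟩, rfl, Subtype.ext (map_zero _)⟩, ?_⟩
  rintro ⟨a, ha⟩
  obtain ⟨t, ht, hlt⟩ := exists_norm_sub_single_lt_norm_sub_dupHead hp a
  exact (ha ⟨lp.single p 0 t, by simpa [lp.single_apply_self]⟩).not_gt hlt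
end

section
/- A discrete semigroup S has a multiplicative left invariant mean on ℓ^∞(S) if and only if any two elements of S have a common right zero, i.e., for all a, b ∈ S there exists z ∈ S with az = z and bz = z. -/
/-!
A multiplicative mean `m` is evaluation along an ultrafilter: `m (1_A)` is an idempotent, hence
`0` or `1`, and the sets with `m (1_A) = 1` form an ultrafilter `U`, which left invariance makes
invariant under every left translation `z ↦ a * z`. Conversely, the limit along an ultrafilter
containing all the sets `{z | a * z = z}` is a multiplicative left invariant mean; these sets are
directed, because a common right zero `z` of `a` and `b` gives
`{w | z * w = w} ⊆ {w | a * w = w} ∩ {w | b * w = w}`.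

The heart of the matter is Katětov's lemma: an ultrafilter `U` with `f U = U` lives on the fixed
points of `f`. Any map `c` into a finite set satisfies `c (f x) = c x` for `U`-almost every `x`,
yet the points moved by `f` carry a finite coloring that `f` always changes. On a grand orbit
containing a cycle, color `x` by the parity of the number of steps to a chosen point of the cycle
and by whether `x` is that point; on a grand orbit without cycles, by the parity of `a - b`, where
`f^[a] x = f^[b] r` for a chosen point `r`.
-/

/-- A bounded real-valued function (element of `ℓ^∞`). -/
def IsBddFn {S : Type*} (f : S → ℝ) : Prop := ∃ M : ℝ, ∀ s, |f s| ≤ M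

open Filter Function Set Topology

namespace Function

variable {X : Type*} (f : X → X)

def grandOrbit (x : X) : Set X := {y | ∃ a b, f^[a] x = f^[b] y}

theorem mem_grandOrbit_self (x : X) : x ∈ grandOrbit f x := ⟨0, 0, rfl⟩

theorem grandOrbit_apply (x : X) : grandOrbit f (f x) = grandOrbit f x := by
  ext y
  constructor
  · rintro ⟨a, b, h⟩
    exact ⟨a + 1, b, by rwa [iterate_succ_apply]⟩
  · rintro ⟨a, b, h⟩
    exact ⟨a, b + 1, by rw [← iterate_succ_apply, iterate_succ_apply', h, iterate_succ_apply']⟩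

theorem iterate_add_eq_of_iterate_eq {x y : X} {a b a' b' : ℕ} (h : f^[a] x = f^[b] y)
    (h' : f^[a'] x = f^[b'] y) : f^[a + b'] x = f^[a' + b] x := by
  rw [add_comm a, add_comm a', iterate_add_apply, iterate_add_apply, h, h', ← iterate_add_apply,
    ← iterate_add_apply, add_comm]

theorem injective_iterate_of_grandOrbit_inter_periodicPts_eq_empty {x : X}
    (h : grandOrbit f x ∩ periodicPts f = ∅) : Injective fun n => f^[n] x := by
  intro i j hij
  by_contra hne
  wlog hlt : i < j generalizing i j
  · exact this hij.symm (Ne.symm hne) (by omega)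
  refine h.subset ⟨⟨i, 0, rfl⟩, j - i, Nat.sub_pos_of_lt hlt, ?_⟩
  change f^[j - i] (f^[i] x) = f^[i] x
  rw [← iterate_add_apply, Nat.sub_add_cancel hlt.le]
  exact hij.symm

theorem exists_iterate_eq_of_mem_grandOrbit_inter_periodicPts {x y : X}
    (hy : y ∈ grandOrbit f x ∩ periodicPts f) : ∃ n, f^[n] x = y := by
  obtain ⟨⟨a, b, hab⟩, p, hp0, hpy⟩ := hy
  refine ⟨p * b - b + a, ?_⟩
  rw [iterate_add_apply, hab, ← iterate_add_apply,
    Nat.sub_add_cancel (Nat.le_mul_of_pos_left b hp0), (hpy.mul_const b).eq]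

noncomputable def cycleRep (x : X) : X :=
  @Classical.epsilon _ ⟨x⟩ (· ∈ grandOrbit f x ∩ periodicPts f)

theorem cycleRep_apply (x : X) : cycleRep f (f x) = cycleRep f x := by
  rw [cycleRep, cycleRep, grandOrbit_apply]

theorem cycleRep_mem {x : X} (hx : (grandOrbit f x ∩ periodicPts f).Nonempty) :
    cycleRep f x ∈ grandOrbit f x ∩ periodicPts f :=
  Classical.epsilon_spec hx

noncomputable def stepsToCycleRep (x : X) : ℕ := sInf {n | f^[n] x = cycleRep f x}

theorem stepsToCycleRep_apply_add_one {x : X} (hx : (grandOrbit f x ∩ periodicPts f).Nonempty)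
    (hne : x ≠ cycleRep f x) : stepsToCycleRep f (f x) + 1 = stepsToCycleRep f x := by
  obtain ⟨n, hn⟩ := exists_iterate_eq_of_mem_grandOrbit_inter_periodicPts f (cycleRep_mem f hx)
  have hk : f^[stepsToCycleRep f x] x = cycleRep f x :=
    Nat.sInf_mem (s := {n | f^[n] x = cycleRep f x}) ⟨n, hn⟩
  obtain ⟨j, hj⟩ : ∃ j, stepsToCycleRep f x = j + 1 :=
    Nat.exists_eq_add_one.mpr (Nat.pos_of_ne_zero fun h0 => hne (by rwa [h0] at hk))
  have hj' : f^[j] (f x) = cycleRep f (f x) := by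
    rw [cycleRep_apply, ← iterate_succ_apply, Nat.succ_eq_add_one, ← hj, hk]
  have hfx : f^[stepsToCycleRep f (f x)] (f x) = cycleRep f (f x) :=
    Nat.sInf_mem (s := {n | f^[n] (f x) = cycleRep f (f x)}) ⟨j, hj'⟩
  rw [cycleRep_apply, ← iterate_succ_apply] at hfx
  have h1 : stepsToCycleRep f (f x) ≤ j := Nat.sInf_le hj'
  have h2 : stepsToCycleRep f x ≤ stepsToCycleRep f (f x) + 1 := Nat.sInf_le hfx
  omega

noncomputable def orbitRep (x : X) : X := @Classical.epsilon _ ⟨x⟩ (· ∈ grandOrbit f x)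

theorem orbitRep_apply (x : X) : orbitRep f (f x) = orbitRep f x := by
  rw [orbitRep, orbitRep, grandOrbit_apply]

theorem orbitRep_mem (x : X) : orbitRep f x ∈ grandOrbit f x :=
  Classical.epsilon_spec ⟨x, mem_grandOrbit_self f x⟩

def orbitParity (x : X) : Prop := ∃ a b, f^[a] x = f^[b] (orbitRep f x) ∧ Even (a + b)

theorem orbitParity_apply_iff {x : X} (hx : Injective fun n => f^[n] x) :
    orbitParity f (f x) ↔ ¬ orbitParity f x := by
  constructor
  · rintro ⟨a, b, hab, heven⟩ ⟨a', b', hab', heven'⟩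
    rw [orbitRep_apply, ← iterate_succ_apply] at hab
    have := hx (iterate_add_eq_of_iterate_eq f hab hab')
    simp only [Nat.even_iff] at heven heven'
    omega
  · intro hodd
    obtain ⟨a, b, hab⟩ := orbitRep_mem f x
    refine ⟨a, b + 1, ?_, ?_⟩
    · rw [orbitRep_apply, ← iterate_succ_apply, iterate_succ_apply', hab, iterate_succ_apply']
    · rw [← add_assoc, Nat.even_add_one]
      exact fun heven => hodd ⟨a, b, hab, heven⟩

def orbitColoring (x : X) : Prop × Prop × Prop :=
  (Even (stepsToCycleRep f x), x = cycleRep f x, orbitParity f x)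

theorem orbitColoring_apply_ne {x : X} (hx : f x ≠ x) :
    orbitColoring f (f x) ≠ orbitColoring f x := by
  intro heq
  simp only [orbitColoring, Prod.mk.injEq, eq_iff_iff] at heq
  obtain ⟨hsteps, hrep, hparity⟩ := heq
  by_cases hper : (grandOrbit f x ∩ periodicPts f).Nonempty
  · by_cases hxrep : x = cycleRep f x
    · rw [cycleRep_apply, ← hxrep] at hrep
      exact hx (hrep.mpr rfl)
    · rw [← stepsToCycleRep_apply_add_one f hper hxrep, Nat.even_add_one] at hsteps
      exact iff_not_self hsteps
  · rw [orbitParity_apply_iff f (injective_iterate_of_grandOrbit_inter_periodicPts_eq_empty f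
      (not_nonempty_iff_eq_empty.mp hper))] at hparity
    exact iff_not_self hparity.symm

end Function

namespace Ultrafilter

variable {X : Type*} {U : Ultrafilter X} {f : X → X}

theorem eventually_comp_apply_eq {ι : Type*} [Finite ι] (h : U.map f = U) (c : X → ι) :
    ∀ᶠ x in U, c (f x) = c x := by
  obtain ⟨i, hi⟩ := (U.map c).eq_pure_of_finite
  have hc : ∀ᶠ x in U, c x = i := show {i} ∈ U.map c by rw [hi]; rfl
  have hcf : ∀ᶠ x in U, c (f x) = i := by
    rw [← h] at hc
    exact hc
  filter_upwards [hc, hcf] with x h1 h2 using h2.trans h1.symm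

theorem eventually_isFixedPt (h : U.map f = U) : ∀ᶠ x in U, IsFixedPt f x :=
  (eventually_comp_apply_eq h (orbitColoring f)).mono fun _ hx =>
    by_contra fun hne => orbitColoring_apply_ne f hne hx

end Ultrafilter

theorem isBddFn_indicator_one {S : Type*} (A : Set S) : IsBddFn (A.indicator (1 : S → ℝ)) :=
  ⟨1, fun s => by by_cases hs : s ∈ A <;> simp [hs]⟩

theorem IsBddFn.tendsto_limUnder {S : Type*} {f : S → ℝ} (hf : IsBddFn f) (U : Ultrafilter S) :
    Tendsto f U (𝓝 (limUnder (U : Filter S) f)) := by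
  obtain ⟨M, hM⟩ := hf
  have hIcc : ∀ᶠ s in (U : Filter S), f s ∈ Icc (-M) M := .of_forall fun s => abs_le.1 (hM s)
  obtain ⟨x, -, hx⟩ := isCompact_Icc.ultrafilter_le_nhds (U.map f) (le_principal_iff.2 hIcc)
  exact tendsto_nhds_limUnder ⟨x, hx⟩

theorem exists_ultrafilter_mem_iff_indicator_eq_one {S : Type*} (m : (S → ℝ) → ℝ)
    (hadd : ∀ f g : S → ℝ, IsBddFn f → IsBddFn g → m (fun s => f s + g s) = m f + m g)
    (hone : m (fun _ => 1) = 1)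
    (hmul : ∀ f g : S → ℝ, IsBddFn f → IsBddFn g → m (fun s => f s * g s) = m f * m g) :
    ∃ U : Ultrafilter S, ∀ A : Set S, A ∈ U ↔ m (A.indicator 1) = 1 := by
  have hinter (A B : Set S) :
      m ((A ∩ B).indicator 1) = m (A.indicator 1) * m (B.indicator 1) := by
    rw [inter_indicator_one]
    exact hmul _ _ (isBddFn_indicator_one A) (isBddFn_indicator_one B)
  have hcompl (A : Set S) : m (A.indicator 1) + m (Aᶜ.indicator 1) = 1 := by
    rw [← hadd _ _ (isBddFn_indicator_one A) (isBddFn_indicator_one Aᶜ), ← hone]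
    exact congrArg m (indicator_self_add_compl A (1 : S → ℝ))
  have hidem (A : Set S) : m (A.indicator 1) = 0 ∨ m (A.indicator 1) = 1 := by
    have h := hinter A A
    rw [inter_self] at h
    rcases mul_eq_zero.1 (show m (A.indicator 1) * (m (A.indicator 1) - 1) = 0 by
      rw [mul_sub, mul_one, ← h, sub_self]) with h0 | h1
    · exact Or.inl h0
    · exact Or.inr (sub_eq_zero.1 h1)
  let F : Filter S :=
    { sets := {A | m (A.indicator 1) = 1}
      univ_sets := by
        change m (univ.indicator 1) = 1
        rwa [indicator_univ]
      sets_of_superset := fun {A B} hA hAB => by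
        have h := hinter A B
        rwa [inter_eq_left.2 hAB, hA, one_mul, eq_comm] at h
      inter_sets := fun {A B} hA hB => by
        change m ((A ∩ B).indicator 1) = 1
        rw [hinter, hA, hB, one_mul] }
  refine ⟨Ultrafilter.ofComplNotMemIff F fun A => ?_, fun A => Iff.rfl⟩
  change m (Aᶜ.indicator 1) ≠ 1 ↔ m (A.indicator 1) = 1
  have := hcompl A
  rcases hidem A with h | h <;> constructor <;> intro <;> simp_all

theorem exists_ultrafilter_forall_eventually_mul_eq {S : Type*} [Semigroup S] [Nonempty S]
    (h : ∀ a b : S, ∃ z, a * z = z ∧ b * z = z) :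
    ∃ U : Ultrafilter S, ∀ a, ∀ᶠ z in (U : Filter S), a * z = z := by
  have hdir : Directed (· ≥ ·) fun a : S => 𝓟 {z | a * z = z} := fun a b => by
    obtain ⟨z, ha, hb⟩ := h a b
    refine ⟨z, principal_mono.2 fun w hw => ?_, principal_mono.2 fun w hw => ?_⟩
    · change a * w = w
      rw [← hw, ← mul_assoc, ha]
    · change b * w = w
      rw [← hw, ← mul_assoc, hb]
  have := iInf_neBot_of_directed hdir fun a => principal_neBot_iff.2 ((h a a).imp fun z hz => hz.1)
  exact ⟨Ultrafilter.of _, fun a => Ultrafilter.of_le _ (mem_iInf_of_mem a (mem_principal_self _))⟩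

/-- Granirer: A discrete semigroup `S` admits a multiplicative left
invariant mean on `ℓ^∞(S)` iff any two elements of `S` have a common right zero. -/
theorem stmt_11 {S : Type*} [Semigroup S] [Nonempty S] :
    (∃ m : (S → ℝ) → ℝ,
      (∀ f g : S → ℝ, IsBddFn f → IsBddFn g → m (fun s => f s + g s) = m f + m g) ∧
      (∀ (c : ℝ) (f : S → ℝ), IsBddFn f → m (fun s => c * f s) = c * m f) ∧
      (m (fun _ => 1) = 1) ∧
      (∀ f : S → ℝ, IsBddFn f → |m f| ≤ ⨆ s, |f s|) ∧
      (∀ f g : S → ℝ, IsBddFn f → IsBddFn g → m (fun s => f s * g s) = m f * m g) ∧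
      (∀ (a : S) (f : S → ℝ), IsBddFn f → m (fun s => f (a * s)) = m f)) ↔
    (∀ a b : S, ∃ z : S, a * z = z ∧ b * z = z) := by
  constructor
  · rintro ⟨m, hadd, -, hone, -, hmul, hinv⟩ a b
    obtain ⟨U, hU⟩ := exists_ultrafilter_mem_iff_indicator_eq_one m hadd hone hmul
    have hmap (c : S) : U.map (c * ·) = U := Ultrafilter.ext fun A => by
      rw [Ultrafilter.mem_map, hU, hU, ← hinv c (A.indicator 1) (isBddFn_indicator_one A)]
      rfl
    exact ((Ultrafilter.eventually_isFixedPt (hmap a)).and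
      (Ultrafilter.eventually_isFixedPt (hmap b))).exists
  · intro h
    obtain ⟨U, hU⟩ := exists_ultrafilter_forall_eventually_mul_eq h
    have hlim {f : S → ℝ} (hf : IsBddFn f) := hf.tendsto_limUnder U
    refine ⟨fun f => limUnder (U : Filter S) f,
      fun f g hf hg => ((hlim hf).add (hlim hg)).limUnder_eq,
      fun c f hf => ((hlim hf).const_mul c).limUnder_eq,
      tendsto_const_nhds.limUnder_eq, fun f hf => ?_,
      fun f g hf hg => ((hlim hf).mul (hlim hg)).limUnder_eq,
      fun a f hf => ((hlim hf).congr' ((hU a).mono fun z hz => congrArg f hz.symm)).limUnder_eq⟩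
    obtain ⟨M, hM⟩ := hf
    exact le_of_tendsto' (hlim ⟨M, hM⟩).abs fun s => le_ciSup ⟨M, forall_mem_range.2 hM⟩ s
end

section
/- Let S be a discrete semigroup with the property that every finite subset σ of S admits an element s_σ ∈ S with s·s_σ = s_σ for all s ∈ σ (extreme left amenability in Granirer's form). Let C be a weakly closed subset of a Banach space E and let {T_s : s ∈ S} be a representation of S on C by weakly continuous maps such that the orbit {T_s c : s ∈ S} of some c ∈ C is relatively weakly compact. Then C contains a common fixed point for S. -/
/-!
For a finite `σ ⊆ S` with common right zero `z`, the orbit point `T z c` is fixed by every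
`s ∈ σ`, since `T s (T z c) = T (s * z) c = T z c`. So the closed sets
`{x ∈ C | T s x = x}` have the finite intersection property inside the compact closure of the
orbit (they are closed because the weak topology is Hausdorff), hence have a common point.
-/

open Set

section FixedPoint

variable {X S : Type*} {C : Set X} {T : S → X → X} {c : X}

theorem closure_orbit_subset [TopologicalSpace X] (hC : IsClosed C)
    (hmaps : ∀ s, MapsTo (T s) C C) (hc : c ∈ C) :
    closure {x | ∃ s : S, x = T s c} ⊆ C :=
  closure_minimal (by rintro _ ⟨s, rfl⟩; exact hmaps s hc) hC

theorem isFixedPt_of_mul_eq_right [Semigroup S]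
    (hrep : ∀ s t : S, ∀ x ∈ C, T (s * t) x = T s (T t x))
    (hc : c ∈ C) {s z : S} (hsz : s * z = z) : Function.IsFixedPt (T s) (T z c) := by
  rw [Function.IsFixedPt, ← hrep s z c hc, hsz]

theorem exists_common_fixedPoint_of_isCompact_closure_orbit [TopologicalSpace X] [T2Space X]
    [Semigroup S]
    (hELA : ∀ σ : Finset S, ∃ z : S, ∀ s ∈ σ, s * z = z)
    (hC : IsClosed C) (hmaps : ∀ s, MapsTo (T s) C C)
    (hrep : ∀ s t : S, ∀ x ∈ C, T (s * t) x = T s (T t x))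
    (hcont : ∀ s, ContinuousOn (T s) C) (hc : c ∈ C)
    (horb : IsCompact (closure {x | ∃ s : S, x = T s c})) :
    ∃ x ∈ C, ∀ s : S, T s x = x := by
  have hfix_closed : ∀ s, IsClosed {x ∈ C | T s x = x} :=
    fun s => hC.isClosed_eq (hcont s) continuousOn_id
  have hfinite : ∀ σ : Finset S,
      (closure {x | ∃ s : S, x = T s c} ∩ ⋂ s ∈ σ, {x ∈ C | T s x = x}).Nonempty := by
    intro σ
    obtain ⟨z, hz⟩ := hELA σ
    refine ⟨T z c, subset_closure ⟨z, rfl⟩, mem_iInter₂.2 fun s hs => ?_⟩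
    exact ⟨hmaps z hc, isFixedPt_of_mul_eq_right hrep hc (hz s hs)⟩
  obtain ⟨x, hxK, hxfix⟩ := horb.inter_iInter_nonempty _ hfix_closed hfinite
  exact ⟨x, closure_orbit_subset hC hmaps hc hxK, fun s => (mem_iInter.1 hxfix s).2⟩

end FixedPoint

theorem stmt_12_general {E : Type*} [NormedAddCommGroup E] [NormedSpace ℝ E]
    {S : Type*} [Semigroup S]
    (hELA : ∀ σ : Finset S, ∃ z : S, ∀ s ∈ σ, s * z = z)
    (C : Set (WeakSpace ℝ E)) (hC : IsClosed C)
    (T : S → WeakSpace ℝ E → WeakSpace ℝ E)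
    (hmaps : ∀ s, Set.MapsTo (T s) C C)
    (hrep : ∀ s t : S, ∀ x ∈ C, T (s * t) x = T s (T t x))
    (hcont : ∀ s, ContinuousOn (T s) C)
    (c : WeakSpace ℝ E) (hc : c ∈ C)
    (horb : IsCompact (closure {x | ∃ s : S, x = T s c})) :
    ∃ x ∈ C, ∀ s : S, T s x = x :=
  exists_common_fixedPoint_of_isCompact_closure_orbit hELA hC hmaps hrep hcont hc horb

/-- If every finite subset of a discrete semigroup `S` has a common
right zero (extreme left amenability), then any weakly continuous representation of
`S` on a weakly closed subset `C` of a Banach space whose orbit of some `c ∈ C` is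
relatively weakly compact has a common fixed point in `C`. -/
theorem stmt_12 {E : Type*} [NormedAddCommGroup E] [NormedSpace ℝ E] [CompleteSpace E]
    {S : Type*} [Semigroup S]
    (hELA : ∀ σ : Finset S, ∃ z : S, ∀ s ∈ σ, s * z = z)
    (C : Set (WeakSpace ℝ E)) (hC : IsClosed C)
    (T : S → WeakSpace ℝ E → WeakSpace ℝ E)
    (hmaps : ∀ s, Set.MapsTo (T s) C C)
    (hrep : ∀ s t : S, ∀ x ∈ C, T (s * t) x = T s (T t x))
    (hcont : ∀ s, ContinuousOn (T s) C)
    (c : WeakSpace ℝ E) (hc : c ∈ C)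
    (horb : IsCompact (closure {x | ∃ s : S, x = T s c})) :
    ∃ x ∈ C, ∀ s : S, T s x = x :=
  stmt_12_general hELA C hC T hmaps hrep hcont c hc horb
end

section
/- Let S be a left reversible semitopological semigroup, let Γ be the collection of all closed right ideals of S, and let ν be a submean on a left invariant positively semilinear subset X of LUC(S) containing positive constants. Then μ(f) = inf_{J ∈ Γ} sup_{s ∈ J} ν(ℓ_s f) defines a left subinvariant submean on X, and μ is strictly increasing whenever ν is. -/
/-!
Write `φ_f s = ν (ℓ_s f)`, so that `μ f` is the infimum over closed right ideals `J` of
`⨆ s ∈ J, φ_f s`. Left reversibility makes the closed right ideals closed under intersection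
(if `a ∈ J₁` and `b ∈ J₂`, both contain `closure (a S) ∩ closure (b S) ≠ ∅`), so the infimum
runs over a downward directed family and the submean inequality passes from `ν` to `μ`; the
same computation with a constant gives strict increase. For subinvariance, each `J` yields the
closed right ideal `closure (a J)`, and left uniform continuity of `f` lets every point of it
be replaced, up to `ε` uniformly in the argument, by some `a j` with `j ∈ J`, whence
`⨆ closure (a J), φ_f ≤ ⨆ J, φ_{ℓ_a f}`.
-/

open Set Filter Topology

structure IsSubmeanOn {ι : Type*} (X : Set (ι → ℝ)) (ν : (ι → ℝ) → ℝ) : Prop where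
  le_add : ∀ f ∈ X, ∀ g₁ ∈ X, ∀ g₂ ∈ X, ∀ α β : ℝ,
    α ∈ Icc (0 : ℝ) 1 → β ∈ Icc (0 : ℝ) 1 →
    (∀ t, f t ≤ α * g₁ t + β * g₂ t) → ν f ≤ α * ν g₁ + β * ν g₂
  map_const : ∀ c : ℝ, 0 < c → ν (fun _ => c) = c

namespace IsSubmeanOn

variable {ι : Type*} {X : Set (ι → ℝ)} {ν : (ι → ℝ) → ℝ} {g h : ι → ℝ}

/-- On an empty index type the constants `1` and `2` coincide, while `ν` must send them to
different values. -/
theorem nonempty (hν : IsSubmeanOn X ν) : Nonempty ι := by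
  by_contra hι
  have hconst : (fun _ : ι => (1 : ℝ)) = fun _ => 2 := funext fun i => (hι ⟨i⟩).elim
  have h12 := hν.map_const 1 one_pos
  rw [hconst, hν.map_const 2 two_pos] at h12
  norm_num at h12

theorem le_add_of_le_add (hν : IsSubmeanOn X ν) (hXc : ∀ c : ℝ, 0 < c → (fun _ => c) ∈ X)
    (hg : g ∈ X) (hh : h ∈ X) {ε : ℝ} (hε : 0 < ε) (hle : ∀ t, g t ≤ h t + ε) :
    ν g ≤ ν h + ε := by
  have := hν.le_add g hg h hh _ (hXc ε hε) 1 1 (by simp) (by simp) (by simpa using hle)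
  simpa [hν.map_const ε hε] using this

theorem abs_le_add_one_of_abs_le [Nonempty ι] (hν : IsSubmeanOn X ν)
    (hXc : ∀ c : ℝ, 0 < c → (fun _ => c) ∈ X) (hg : g ∈ X) {M : ℝ} (hM : ∀ t, |g t| ≤ M) :
    |ν g| ≤ M + 1 := by
  have hM0 : 0 ≤ M := (abs_nonneg _).trans (hM (Classical.arbitrary ι))
  have hc := hXc (M + 1) (by linarith)
  have hupper := hν.le_add g hg _ hc _ hc 1 0 (by simp) (by simp)
    fun t => by linarith [(abs_le.1 (hM t)).2]
  have hlower := hν.le_add _ (hXc 1 one_pos) g hg _ hc 1 1 (by simp) (by simp)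
    fun t => by linarith [(abs_le.1 (hM t)).1]
  rw [hν.map_const _ (by linarith)] at hupper
  rw [hν.map_const 1 one_pos, hν.map_const _ (by linarith)] at hlower
  exact abs_le.2 ⟨by linarith, by linarith⟩

end IsSubmeanOn

theorem IsSubmeanOn.exists_abs_translate_le {S : Type*} [Mul S] [Nonempty S]
    {X : Set (S → ℝ)} {ν : (S → ℝ) → ℝ} (hν : IsSubmeanOn X ν)
    (hXc : ∀ c : ℝ, 0 < c → (fun _ => c) ∈ X) (hXb : ∀ f ∈ X, ∃ M : ℝ, ∀ s, |f s| ≤ M)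
    (hXinv : ∀ s : S, ∀ f ∈ X, (fun t => f (s * t)) ∈ X) {f : S → ℝ} (hf : f ∈ X) :
    ∃ B, ∀ s, |ν fun t => f (s * t)| ≤ B := by
  obtain ⟨M, hM⟩ := hXb f hf
  exact ⟨M + 1, fun s => hν.abs_le_add_one_of_abs_le hXc (hXinv s f hf) fun t => hM _⟩

noncomputable def infSup {S : Type*} (Γ : Set (Set S)) (φ : S → ℝ) : ℝ :=
  ⨅ J : Γ, ⨆ s : J.1, φ s

section InfSup

variable {S : Type*} {Γ : Set (Set S)} {φ ψ ψ₁ ψ₂ : S → ℝ} {B C C₁ C₂ : ℝ}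

theorem le_iSup_of_abs_le (hφ : ∀ s, |φ s| ≤ B) {J : Set S} {s : S} (hs : s ∈ J) :
    φ s ≤ ⨆ x : J, φ x :=
  le_ciSup_set ⟨B, by rintro _ ⟨x, -, rfl⟩; exact (abs_le.1 (hφ x)).2⟩ hs

theorem infSup_le (hΓ : ∀ J ∈ Γ, J.Nonempty) (hφ : ∀ s, |φ s| ≤ B) {J : Set S}
    (hJ : J ∈ Γ) : infSup Γ φ ≤ ⨆ s : J, φ s := by
  refine ciInf_le ⟨-B, ?_⟩ (⟨J, hJ⟩ : Γ)
  rintro _ ⟨K, rfl⟩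
  obtain ⟨s, hs⟩ := hΓ K.1 K.2
  exact (neg_le_of_abs_le (hφ s)).trans (le_iSup_of_abs_le hφ hs)

theorem infSup_const (hΓ : ∀ J ∈ Γ, J.Nonempty) [Nonempty Γ] (c : ℝ) :
    infSup Γ (fun _ => c) = c := by
  have hsup : ∀ J : Γ, ⨆ _ : J.1, c = c := fun J =>
    have := (hΓ J.1 J.2).to_subtype
    ciSup_const
  simp only [infSup, hsup, ciInf_const]

theorem mul_infSup {a : ℝ} (ha : 0 ≤ a) :
    a * infSup Γ φ = ⨅ J : Γ, a * ⨆ s : J.1, φ s :=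
  Real.mul_iInf_of_nonneg ha _

/-- Closedness of `Γ` under intersections is what lets the two infima on the right be taken
independently: `J₁ ∩ J₂ ∈ Γ` bounds `infSup Γ φ` by `a * ⨆ J₁, ψ₁ + b * ⨆ J₂, ψ₂`. -/
theorem infSup_le_add (hΓ : ∀ J ∈ Γ, J.Nonempty)
    (hΓinter : ∀ J₁ ∈ Γ, ∀ J₂ ∈ Γ, J₁ ∩ J₂ ∈ Γ) [Nonempty Γ] (hφ : ∀ s, |φ s| ≤ B)
    (hψ₁ : ∀ s, |ψ₁ s| ≤ C₁) (hψ₂ : ∀ s, |ψ₂ s| ≤ C₂)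
    {a b : ℝ} (ha : 0 ≤ a) (hb : 0 ≤ b) (hle : ∀ s, φ s ≤ a * ψ₁ s + b * ψ₂ s) :
    infSup Γ φ ≤ a * infSup Γ ψ₁ + b * infSup Γ ψ₂ := by
  have hsup : ∀ J₁ : Γ, ∀ J₂ : Γ,
      infSup Γ φ ≤ a * (⨆ s : J₁.1, ψ₁ s) + b * ⨆ s : J₂.1, ψ₂ s := by
    intro J₁ J₂
    have hJ := hΓinter J₁.1 J₁.2 J₂.1 J₂.2
    have := (hΓ _ hJ).to_subtype
    refine (infSup_le hΓ hφ hJ).trans (ciSup_le fun s => (hle s).trans ?_)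
    gcongr
    exacts [le_iSup_of_abs_le hψ₁ s.2.1, le_iSup_of_abs_le hψ₂ s.2.2]
  have hinf₁ : ∀ J₂ : Γ, infSup Γ φ - b * (⨆ s : J₂.1, ψ₂ s) ≤ a * infSup Γ ψ₁ := by
    intro J₂
    rw [mul_infSup ha]
    exact le_ciInf fun J₁ => by linarith [hsup J₁ J₂]
  have hinf₂ : infSup Γ φ - a * infSup Γ ψ₁ ≤ b * infSup Γ ψ₂ := by
    rw [mul_infSup hb]
    exact le_ciInf fun J₂ => by linarith [hinf₁ J₂]
  linarith

theorem infSup_add_le (hΓ : ∀ J ∈ Γ, J.Nonempty)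
    (hΓinter : ∀ J₁ ∈ Γ, ∀ J₂ ∈ Γ, J₁ ∩ J₂ ∈ Γ) [Nonempty Γ] (hφ : ∀ s, |φ s| ≤ B)
    (hψ : ∀ s, |ψ s| ≤ C) {δ : ℝ}
    (hle : ∀ s, φ s + δ ≤ ψ s) : infSup Γ φ + δ ≤ infSup Γ ψ := by
  have := infSup_le_add hΓ hΓinter hφ hψ (fun _ => (abs_neg δ).le) zero_le_one
    zero_le_one fun s => by linarith [hle s]
  rw [infSup_const hΓ] at this
  linarith

theorem infSup_le_infSup_of_approx (hΓ : ∀ J ∈ Γ, J.Nonempty) [Nonempty Γ]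
    (hφ : ∀ s, |φ s| ≤ B) (hψ : ∀ s, |ψ s| ≤ C)
    (happrox : ∀ J ∈ Γ, ∃ K ∈ Γ, ∀ x ∈ K, ∀ ε > 0, ∃ s ∈ J, φ x ≤ ψ s + ε) :
    infSup Γ φ ≤ infSup Γ ψ := by
  refine le_ciInf fun J => ?_
  obtain ⟨K, hK, hKJ⟩ := happrox J.1 J.2
  have := (hΓ K hK).to_subtype
  refine (infSup_le hΓ hφ hK).trans (ciSup_le fun x => ?_)
  refine le_of_forall_pos_le_add fun ε hε => ?_
  obtain ⟨s, hs, hxs⟩ := hKJ x.1 x.2 ε hε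
  linarith [le_iSup_of_abs_le hψ hs]

end InfSup

def closedRightIdeals (S : Type*) [Semigroup S] [TopologicalSpace S] : Set (Set S) :=
  {J | J.Nonempty ∧ IsClosed J ∧ ∀ x ∈ J, ∀ s : S, x * s ∈ J}

section ClosedRightIdeals

variable {S : Type*} [Semigroup S] [TopologicalSpace S]

theorem univ_mem_closedRightIdeals [Nonempty S] : univ ∈ closedRightIdeals S :=
  ⟨univ_nonempty, isClosed_univ, fun _ _ _ => mem_univ _⟩

instance [Nonempty S] : Nonempty (closedRightIdeals S) :=
  ⟨⟨univ, univ_mem_closedRightIdeals⟩⟩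

theorem closure_mem_closedRightIdeals (hrs : ∀ a : S, Continuous fun x => x * a) {T : Set S}
    (hT : T.Nonempty) (hTideal : ∀ x ∈ T, ∀ s : S, x * s ∈ T) :
    closure T ∈ closedRightIdeals S := by
  refine ⟨hT.mono subset_closure, isClosed_closure, fun x hx s => ?_⟩
  have hsub : T ⊆ (· * s) ⁻¹' closure T := fun y hy => subset_closure (hTideal y hy s)
  exact closure_minimal hsub (isClosed_closure.preimage (hrs s)) hx

theorem closure_image_mul_left_mem_closedRightIdeals
    (hrs : ∀ a : S, Continuous fun x => x * a) (a : S) {J : Set S}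
    (hJ : J ∈ closedRightIdeals S) : closure ((a * ·) '' J) ∈ closedRightIdeals S := by
  refine closure_mem_closedRightIdeals hrs (hJ.1.image _) ?_
  rintro _ ⟨j, hj, rfl⟩ s
  exact ⟨j * s, hJ.2.2 j hj s, (mul_assoc a j s).symm⟩

theorem closure_range_mul_left_subset {J : Set S} (hJ : J ∈ closedRightIdeals S) {a : S}
    (ha : a ∈ J) : closure (range (a * ·)) ⊆ J :=
  closure_minimal (range_subset_iff.2 (hJ.2.2 a ha)) hJ.2.1

theorem inter_mem_closedRightIdeals
    (hlr : ∀ a b : S,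
      (closure (range fun s => a * s) ∩ closure (range fun s => b * s)).Nonempty)
    {J₁ J₂ : Set S} (hJ₁ : J₁ ∈ closedRightIdeals S) (hJ₂ : J₂ ∈ closedRightIdeals S) :
    J₁ ∩ J₂ ∈ closedRightIdeals S := by
  obtain ⟨a, ha⟩ := hJ₁.1
  obtain ⟨b, hb⟩ := hJ₂.1
  obtain ⟨c, hca, hcb⟩ := hlr a b
  exact ⟨⟨c, closure_range_mul_left_subset hJ₁ ha hca,
      closure_range_mul_left_subset hJ₂ hb hcb⟩,
    hJ₁.2.1.inter hJ₂.2.1, fun x hx s => ⟨hJ₁.2.2 x hx.1 s, hJ₂.2.2 x hx.2 s⟩⟩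

end ClosedRightIdeals

section RightIdealInfSup

variable {S : Type*} [Semigroup S] [TopologicalSpace S] {X : Set (S → ℝ)}
  {ν : (S → ℝ) → ℝ}

theorem exists_mem_translate_le_add_of_mem_closure {f : S → ℝ}
    (hf : ∀ s₀ : S, ∀ ε > (0 : ℝ), ∀ᶠ s in 𝓝 s₀, ∀ t, |f (s * t) - f (s₀ * t)| ≤ ε)
    {A : Set S} {x : S} (hx : x ∈ closure A) {ε : ℝ} (hε : 0 < ε) :
    ∃ y ∈ A, ∀ t, f (x * t) ≤ f (y * t) + ε := by
  obtain ⟨y, hy, hyA⟩ := mem_closure_iff_nhds.1 hx _ (hf x ε hε)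
  exact ⟨y, hyA, fun t => by linarith [(abs_le.1 (hy t)).1]⟩

noncomputable def rightIdealInfSup (ν : (S → ℝ) → ℝ) (f : S → ℝ) : ℝ :=
  infSup (closedRightIdeals S) fun s => ν fun t => f (s * t)

theorem isSubmeanOn_rightIdealInfSup (hlr : ∀ a b : S,
      (closure (range fun s => a * s) ∩ closure (range fun s => b * s)).Nonempty)
    (hXb : ∀ f ∈ X, ∃ M : ℝ, ∀ s, |f s| ≤ M)
    (hXc : ∀ c : ℝ, 0 < c → (fun _ => c) ∈ X)
    (hXinv : ∀ s : S, ∀ f ∈ X, (fun t => f (s * t)) ∈ X) (hν : IsSubmeanOn X ν) :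
    IsSubmeanOn X (rightIdealInfSup ν) := by
  have := hν.nonempty
  refine ⟨fun f hf g₁ hg₁ g₂ hg₂ α β hα hβ hle => ?_, fun c hc => ?_⟩
  · obtain ⟨B, hB⟩ := hν.exists_abs_translate_le hXc hXb hXinv hf
    obtain ⟨C₁, hC₁⟩ := hν.exists_abs_translate_le hXc hXb hXinv hg₁
    obtain ⟨C₂, hC₂⟩ := hν.exists_abs_translate_le hXc hXb hXinv hg₂
    exact infSup_le_add (fun J hJ => hJ.1)
      (fun J₁ hJ₁ J₂ hJ₂ => inter_mem_closedRightIdeals hlr hJ₁ hJ₂) hB hC₁ hC₂ hα.1 hβ.1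
      fun s => hν.le_add _ (hXinv s f hf) _ (hXinv s g₁ hg₁) _ (hXinv s g₂ hg₂) α β hα hβ
        fun t => hle (s * t)
  · simp only [rightIdealInfSup, hν.map_const c hc]
    exact infSup_const (fun J hJ => hJ.1) c

theorem rightIdealInfSup_le_translate (hrs : ∀ a : S, Continuous fun x => x * a)
    (hXb : ∀ f ∈ X, ∃ M : ℝ, ∀ s, |f s| ≤ M)
    (hXluc : ∀ f ∈ X, ∀ s₀ : S, ∀ ε > (0 : ℝ),
      ∀ᶠ s in 𝓝 s₀, ∀ t, |f (s * t) - f (s₀ * t)| ≤ ε)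
    (hXc : ∀ c : ℝ, 0 < c → (fun _ => c) ∈ X)
    (hXinv : ∀ s : S, ∀ f ∈ X, (fun t => f (s * t)) ∈ X) (hν : IsSubmeanOn X ν)
    (a : S) {f : S → ℝ} (hf : f ∈ X) :
    rightIdealInfSup ν f ≤ rightIdealInfSup ν fun t => f (a * t) := by
  have := hν.nonempty
  obtain ⟨B, hB⟩ := hν.exists_abs_translate_le hXc hXb hXinv hf
  obtain ⟨C, hC⟩ := hν.exists_abs_translate_le hXc hXb hXinv (hXinv a f hf)
  refine infSup_le_infSup_of_approx (fun J hJ => hJ.1) hB hC fun J hJ =>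
    ⟨_, closure_image_mul_left_mem_closedRightIdeals hrs a hJ, fun x hx ε hε => ?_⟩
  obtain ⟨_, ⟨j, hj, rfl⟩, hxj⟩ :=
    exists_mem_translate_le_add_of_mem_closure (hXluc f hf) hx hε
  refine ⟨j, hj, ?_⟩
  simpa only [mul_assoc] using
    hν.le_add_of_le_add hXc (hXinv x f hf) (hXinv (a * j) f hf) hε hxj

theorem rightIdealInfSup_add_le (hlr : ∀ a b : S,
      (closure (range fun s => a * s) ∩ closure (range fun s => b * s)).Nonempty)
    (hXb : ∀ f ∈ X, ∃ M : ℝ, ∀ s, |f s| ≤ M)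
    (hXc : ∀ c : ℝ, 0 < c → (fun _ => c) ∈ X)
    (hXinv : ∀ s : S, ∀ f ∈ X, (fun t => f (s * t)) ∈ X) (hν : IsSubmeanOn X ν)
    {δ : ℝ} {f g : S → ℝ} (hf : f ∈ X) (hg : g ∈ X)
    (hfg : ∀ s : S, (ν fun t => f (s * t)) + δ ≤ ν fun t => g (s * t)) :
    rightIdealInfSup ν f + δ ≤ rightIdealInfSup ν g := by
  have := hν.nonempty
  obtain ⟨B, hB⟩ := hν.exists_abs_translate_le hXc hXb hXinv hf
  obtain ⟨C, hC⟩ := hν.exists_abs_translate_le hXc hXb hXinv hg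
  exact infSup_add_le (fun J hJ => hJ.1)
    (fun J₁ hJ₁ J₂ hJ₂ => inter_mem_closedRightIdeals hlr hJ₁ hJ₂) hB hC hfg

end RightIdealInfSup

theorem stmt_15_general {S : Type*} [Semigroup S] [TopologicalSpace S]
    (hrs : ∀ a : S, Continuous fun x => x * a)
    (hlr : ∀ a b : S,
      (closure (Set.range fun s => a * s) ∩ closure (Set.range fun s => b * s)).Nonempty)
    (X : Set (S → ℝ))
    (hXb : ∀ f ∈ X, ∃ M : ℝ, ∀ s, |f s| ≤ M)
    (hXluc : ∀ f ∈ X, Continuous f ∧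
      ∀ s₀ : S, ∀ ε > (0 : ℝ), ∀ᶠ s in nhds s₀, ∀ t, |f (s * t) - f (s₀ * t)| ≤ ε)
    (hXsl : ∀ f ∈ X, ∀ g ∈ X, ∀ α β : ℝ, 0 ≤ α → 0 ≤ β →
      (fun t => α * f t + β * g t) ∈ X)
    (hXc : ∀ c : ℝ, 0 < c → (fun _ => c) ∈ X)
    (hXinv : ∀ s : S, ∀ f ∈ X, (fun t => f (s * t)) ∈ X)
    (ν : (S → ℝ) → ℝ)
    (hν1 : ∀ f ∈ X, ∀ g₁ ∈ X, ∀ g₂ ∈ X, ∀ α β : ℝ,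
      α ∈ Set.Icc (0 : ℝ) 1 → β ∈ Set.Icc (0 : ℝ) 1 →
      (∀ t, f t ≤ α * g₁ t + β * g₂ t) → ν f ≤ α * ν g₁ + β * ν g₂)
    (hν2 : ∀ c : ℝ, 0 < c → ν (fun _ => c) = c) :
    let Γ : Set (Set S) := {J | J.Nonempty ∧ IsClosed J ∧ ∀ x ∈ J, ∀ s : S, x * s ∈ J}
    let μ : (S → ℝ) → ℝ := fun f => ⨅ J : Γ, ⨆ s : J.1, ν fun t => f (s.1 * t)
    ((∀ f ∈ X, ∀ g₁ ∈ X, ∀ g₂ ∈ X, ∀ α β : ℝ,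
        α ∈ Set.Icc (0 : ℝ) 1 → β ∈ Set.Icc (0 : ℝ) 1 →
        (∀ t, f t ≤ α * g₁ t + β * g₂ t) → μ f ≤ α * μ g₁ + β * μ g₂) ∧
      (∀ c : ℝ, 0 < c → μ (fun _ => c) = c) ∧
      (∀ s : S, ∀ f ∈ X, μ f ≤ μ fun t => f (s * t))) ∧
    ((∀ c : ℝ, 0 < c → ∃ δ > (0 : ℝ), ∀ f ∈ X, ν f + δ ≤ ν fun t => f t + c) →
      (∀ c : ℝ, 0 < c → ∃ δ > (0 : ℝ), ∀ f ∈ X, μ f + δ ≤ μ fun t => f t + c)) := by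
  intro Γ μ
  have hν : IsSubmeanOn X ν := ⟨hν1, hν2⟩
  have hμ : IsSubmeanOn X μ := isSubmeanOn_rightIdealInfSup hlr hXb hXc hXinv hν
  refine ⟨⟨hμ.le_add, hμ.map_const, fun a f hf => ?_⟩, fun hstrict c hc => ?_⟩
  · exact rightIdealInfSup_le_translate hrs hXb (fun f hf => (hXluc f hf).2) hXc hXinv hν a
      hf
  · obtain ⟨δ, hδ, hνδ⟩ := hstrict c hc
    refine ⟨δ, hδ, fun f hf => ?_⟩
    have hfc : (fun t => f t + c) ∈ X := by
      simpa using hXsl f hf _ (hXc c hc) 1 1 zero_le_one zero_le_one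
    exact rightIdealInfSup_add_le hlr hXb hXc hXinv hν hf hfc fun s =>
      hνδ _ (hXinv s f hf)

/-- For a left reversible semitopological semigroup `S` and a submean
`ν` on a left invariant positively semilinear subset `X` of `LUC(S)` containing the
positive constants, `μ(f) = inf_{J ∈ Γ} sup_{s ∈ J} ν(ℓ_s f)` (infimum over the
closed right ideals `J` of `S`) is a left subinvariant submean on `X`, which is
strictly increasing whenever `ν` is. -/
theorem stmt_15 {S : Type*} [Semigroup S] [TopologicalSpace S]
    (hls : ∀ a : S, Continuous fun x => a * x)
    (hrs : ∀ a : S, Continuous fun x => x * a)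
    (hlr : ∀ a b : S,
      (closure (Set.range fun s => a * s) ∩ closure (Set.range fun s => b * s)).Nonempty)
    (X : Set (S → ℝ))
    (hXb : ∀ f ∈ X, ∃ M : ℝ, ∀ s, |f s| ≤ M)
    (hXluc : ∀ f ∈ X, Continuous f ∧
      ∀ s₀ : S, ∀ ε > (0 : ℝ), ∀ᶠ s in nhds s₀, ∀ t, |f (s * t) - f (s₀ * t)| ≤ ε)
    (hXsl : ∀ f ∈ X, ∀ g ∈ X, ∀ α β : ℝ, 0 ≤ α → 0 ≤ β →
      (fun t => α * f t + β * g t) ∈ X)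
    (hXc : ∀ c : ℝ, 0 < c → (fun _ => c) ∈ X)
    (hXinv : ∀ s : S, ∀ f ∈ X, (fun t => f (s * t)) ∈ X)
    (ν : (S → ℝ) → ℝ)
    (hν1 : ∀ f ∈ X, ∀ g₁ ∈ X, ∀ g₂ ∈ X, ∀ α β : ℝ,
      α ∈ Set.Icc (0 : ℝ) 1 → β ∈ Set.Icc (0 : ℝ) 1 →
      (∀ t, f t ≤ α * g₁ t + β * g₂ t) → ν f ≤ α * ν g₁ + β * ν g₂)
    (hν2 : ∀ c : ℝ, 0 < c → ν (fun _ => c) = c) :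
    let Γ : Set (Set S) := {J | J.Nonempty ∧ IsClosed J ∧ ∀ x ∈ J, ∀ s : S, x * s ∈ J}
    let μ : (S → ℝ) → ℝ := fun f => ⨅ J : Γ, ⨆ s : J.1, ν fun t => f (s.1 * t)
    ((∀ f ∈ X, ∀ g₁ ∈ X, ∀ g₂ ∈ X, ∀ α β : ℝ,
        α ∈ Set.Icc (0 : ℝ) 1 → β ∈ Set.Icc (0 : ℝ) 1 →
        (∀ t, f t ≤ α * g₁ t + β * g₂ t) → μ f ≤ α * μ g₁ + β * μ g₂) ∧
      (∀ c : ℝ, 0 < c → μ (fun _ => c) = c) ∧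
      (∀ s : S, ∀ f ∈ X, μ f ≤ μ fun t => f (s * t))) ∧
    ((∀ c : ℝ, 0 < c → ∃ δ > (0 : ℝ), ∀ f ∈ X, ν f + δ ≤ ν fun t => f t + c) →
      (∀ c : ℝ, 0 < c → ∃ δ > (0 : ℝ), ∀ f ∈ X, μ f + δ ≤ μ fun t => f t + c)) :=
  stmt_15_general hrs hlr X hXb hXluc hXsl hXc hXinv ν hν1 hν2
end

section
/- Every left amenable discrete semigroup is left reversible: if ℓ^∞(S) admits a left invariant mean, then aS ∩ bS ≠ ∅ for all a, b ∈ S. -/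
namespace IsBddFn

variable {S : Type*}

lemma add {f g : S → ℝ} (hf : IsBddFn f) (hg : IsBddFn g) : IsBddFn (fun s => f s + g s) := by
  obtain ⟨M, hM⟩ := hf
  obtain ⟨N, hN⟩ := hg
  exact ⟨M + N, fun s => (abs_add_le _ _).trans (add_le_add (hM s) (hN s))⟩

lemma sub {f g : S → ℝ} (hf : IsBddFn f) (hg : IsBddFn g) : IsBddFn (fun s => f s - g s) := by
  obtain ⟨M, hM⟩ := hf
  obtain ⟨N, hN⟩ := hg
  exact ⟨M + N, fun s => (abs_sub _ _).trans (add_le_add (hM s) (hN s))⟩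

lemma indicator_one (A : Set S) : IsBddFn (A.indicator 1) :=
  ⟨1, fun s => by by_cases hs : s ∈ A <;> simp [hs]⟩

end IsBddFn

section

variable {S : Type*}

lemma map_le_map_of_additive_of_nonneg (m : (S → ℝ) → ℝ)
    (hadd : ∀ f g : S → ℝ, IsBddFn f → IsBddFn g → m (fun s => f s + g s) = m f + m g)
    (hpos : ∀ f : S → ℝ, IsBddFn f → (∀ s, 0 ≤ f s) → 0 ≤ m f)
    {f g : S → ℝ} (hf : IsBddFn f) (hg : IsBddFn g) (hfg : ∀ s, f s ≤ g s) : m f ≤ m g := by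
  have hdiff : IsBddFn (fun s => g s - f s) := hg.sub hf
  have hsplit : m g = m f + m (fun s => g s - f s) := by
    rw [← hadd f _ hf hdiff]
    simp only [add_sub_cancel]
  have := hpos _ hdiff fun s => sub_nonneg.mpr (hfg s)
  linarith

lemma mean_indicator_range_mul [Semigroup S] (m : (S → ℝ) → ℝ) (hone : m (fun _ => 1) = 1)
    (hinv : ∀ (a : S) (f : S → ℝ), IsBddFn f → m (fun s => f (a * s)) = m f) (a : S) :
    m ((Set.range (a * ·)).indicator 1) = 1 := by
  rw [← hinv a _ (IsBddFn.indicator_one _), ← hone]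
  congr 1
  funext s
  simp

end

theorem stmt_16_general {S : Type*} [Semigroup S]
    (m : (S → ℝ) → ℝ)
    (hadd : ∀ f g : S → ℝ, IsBddFn f → IsBddFn g → m (fun s => f s + g s) = m f + m g)
    (hpos : ∀ f : S → ℝ, IsBddFn f → (∀ s, 0 ≤ f s) → 0 ≤ m f)
    (hone : m (fun _ => 1) = 1)
    (hinv : ∀ (a : S) (f : S → ℝ), IsBddFn f → m (fun s => f (a * s)) = m f) :
    ∀ a b : S, ∃ s t : S, a * s = b * t := by
  intro a b
  by_contra! hne
  set A := Set.range (a * ·)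
  set B := Set.range (b * ·)
  have hAB : ∀ s, s ∉ A ∩ B := by
    rintro _ ⟨⟨s, rfl⟩, t, ht⟩
    exact hne s t ht.symm
  have hsum_le : ∀ s, A.indicator 1 s + B.indicator 1 s ≤ (1 : ℝ) := fun s => by
    rw [← Set.indicator_union_of_notMem_inter (hAB s)]
    exact Set.indicator_apply_le' (fun _ => le_rfl) (fun _ => zero_le_one)
  have hmean_le := map_le_map_of_additive_of_nonneg m hadd hpos
    ((IsBddFn.indicator_one A).add (IsBddFn.indicator_one B)) ⟨1, fun _ => by simp⟩ hsum_le
  rw [hadd _ _ (IsBddFn.indicator_one A) (IsBddFn.indicator_one B), hone,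
    mean_indicator_range_mul m hone hinv, mean_indicator_range_mul m hone hinv] at hmean_le
  norm_num at hmean_le

/-- Every left amenable discrete semigroup is left reversible: if
`ℓ^∞(S)` has a left invariant mean then `aS ∩ bS ≠ ∅` for all `a, b ∈ S`. -/
theorem stmt_16 {S : Type*} [Semigroup S] [Nonempty S]
    (m : (S → ℝ) → ℝ)
    (hadd : ∀ f g : S → ℝ, IsBddFn f → IsBddFn g → m (fun s => f s + g s) = m f + m g)
    (hsmul : ∀ (c : ℝ) (f : S → ℝ), IsBddFn f → m (fun s => c * f s) = c * m f)
    (hpos : ∀ f : S → ℝ, IsBddFn f → (∀ s, 0 ≤ f s) → 0 ≤ m f)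
    (hone : m (fun _ => 1) = 1)
    (hinv : ∀ (a : S) (f : S → ℝ), IsBddFn f → m (fun s => f (a * s)) = m f) :
    ∀ a b : S, ∃ s t : S, a * s = b * t :=
  stmt_16_general m hadd hpos hone hinv
end
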